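/- Let $\mathfrak{g}$ be a finite-dimensional complex simple Lie algebra and $L = \mathfrak{L}(\mathfrak{g})/Z(\mathfrak{L}(\mathfrak{g}))$ the quotient of the affine-Virasoro Lie algebra by its center. Every Lie algebra module endomorphism $\gamma \in \mathrm{Hom}_L(L, L)$ (i.e., linear map commuting with the adjoint action: $\gamma([x,y]) = [x, \gamma(y)]$ for all $x,y$) is a scalar multiple of the identity. -/

import Mathlib

/-- The affine-Virasoro Lie algebra structure: `L` is the affine-Virasoro Lie algebra
associated with the Lie algebra `g`, with `E m x` playing the role of `x ⊗ tᵐ`,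
`d m` the Virasoro generators, and central elements `K₁, K₂`. -/
structure AffineVirasoro (g L : Type*) [LieRing g] [LieAlgebra ℂ g]
    [LieRing L] [LieAlgebra ℂ L] where
  E : ℤ → g →ₗ[ℂ] L
  d : ℤ → L
  K₁ : L
  K₂ : L
  bracket_EE : ∀ (m n : ℤ) (x y : g), ⁅E m x, E n y⁆ =
    E (m + n) ⁅x, y⁆ + (if m + n = 0 then ((m : ℂ) * killingForm ℂ g x y) • K₁ else 0)
  bracket_dE : ∀ (m n : ℤ) (x : g), ⁅d m, E n x⁆ = (n : ℂ) • E (m + n) x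
  bracket_dd : ∀ m n : ℤ, ⁅d m, d n⁆ =
    ((n : ℂ) - (m : ℂ)) • d (m + n) +
      (if m + n = 0 then (((m : ℂ) ^ 3 - (m : ℂ)) / 12) • K₂ else 0)
  central_K₁ : ∀ v : L, ⁅v, K₁⁆ = 0
  central_K₂ : ∀ v : L, ⁅v, K₂⁆ = 0
  spans : Submodule.span ℂ
    (({K₁, K₂} : Set L) ∪ Set.range d ∪ ⋃ m : ℤ, Set.range (E m)) = ⊤
  indep : ∀ (f : ℤ →₀ g) (c : ℤ →₀ ℂ) (a b : ℂ),
    ((f.sum fun m x => E m x) + (c.sum fun m t => t • d m) + a • K₁ + b • K₂ = 0) →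
    f = 0 ∧ c = 0 ∧ a = 0 ∧ b = 0

/-- The degree-`n` graded component `L(g)ₙ` of the affine-Virasoro Lie algebra. -/
def AffineVirasoro.graded {g L : Type*} [LieRing g] [LieAlgebra ℂ g]
    [LieRing L] [LieAlgebra ℂ L] (V : AffineVirasoro g L) (n : ℤ) : Submodule ℂ L :=
  if n = 0 then
    Submodule.span ℂ (Set.range (V.E 0) ∪ {V.d 0, V.K₁, V.K₂})
  else
    Submodule.span ℂ (Set.range (V.E n) ∪ {V.d n})

/-- The degree-`n` component `g̃ₙ` of the ideal `g̃ = ĝ ⊕ ℂK₁`. -/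
def AffineVirasoro.gtilde {g L : Type*} [LieRing g] [LieAlgebra ℂ g]
    [LieRing L] [LieAlgebra ℂ L] (V : AffineVirasoro g L) (n : ℤ) : Submodule ℂ L :=
  if n = 0 then
    Submodule.span ℂ (Set.range (V.E 0) ∪ {V.K₁})
  else
    Submodule.span ℂ (Set.range (V.E n))

/-!
Since `γ` commutes with `ad`, `γ (d₀)` commutes with `d₀` modulo the center. As `ad d₀` acts on
`x ⊗ tᵐ` and `dₘ` by the scalar `m`, this forces `γ d₀ = x ⊗ 1 + r d₀` modulo the center; bracketing
with `g ⊗ 1` shows that `x` is central in the simple algebra `g`, so `γ d₀ = r d₀`. The preimage in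
`L(g)` of the `r`-eigenspace of `γ` is then an ideal containing `d₀` and the center, and every ideal
containing `d₀` contains all eigenvectors `x ⊗ tᵐ, dₘ` (`m ≠ 0`) of `ad d₀`, hence also
`x ⊗ 1 = -[d₁, x ⊗ t⁻¹]`: it is everything.
-/

namespace Finsupp

variable (R M : Type*) [CommRing R] [AddCommGroup M] [Module R M]

noncomputable def indexSMul : (ℤ →₀ M) →ₗ[R] (ℤ →₀ M) :=
  Finsupp.lsum R fun m => (m : R) • Finsupp.lsingle m

variable {R M}

@[simp]
lemma indexSMul_single (m : ℤ) (x : M) :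
    indexSMul R M (single m x) = single m ((m : R) • x) := by
  simp [indexSMul]

lemma indexSMul_apply (f : ℤ →₀ M) (m : ℤ) : indexSMul R M f m = (m : R) • f m := by
  induction f using Finsupp.induction_linear with
  | zero => simp
  | add f f' hf hf' => simp [hf, hf']
  | single n x => rcases eq_or_ne n m with rfl | h <;> simp [*]

lemma eq_single_zero_of_indexSMul_eq_zero {K : Type*} [Field K] [CharZero K] [Module K M]
    {f : ℤ →₀ M} (h : indexSMul K M f = 0) : f = single 0 (f 0) := by
  ext m
  rcases eq_or_ne m 0 with rfl | hm
  · simp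
  · have hfm := indexSMul_apply (R := K) f m
    rw [h, zero_apply, eq_comm, smul_eq_zero] at hfm
    simp [hm.symm, hfm.resolve_left (Int.cast_ne_zero.2 hm)]

lemma eq_single_zero_of_indexSMul_indexSMul_eq_zero {K : Type*} [Field K] [CharZero K]
    [Module K M] {f : ℤ →₀ M} (h : indexSMul K M (indexSMul K M f) = 0) : f = single 0 (f 0) := by
  have h' : indexSMul K M f = 0 := by
    rw [eq_single_zero_of_indexSMul_eq_zero h, indexSMul_apply]
    simp
  exact eq_single_zero_of_indexSMul_eq_zero h'

end Finsupp

lemma LieAlgebra.eq_zero_of_forall_lie_eq_zero {R L : Type*} [CommRing R] [LieRing L]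
    [LieAlgebra R L] [LieModule.IsFaithful R L L] {x : L} (h : ∀ y : L, ⁅y, x⁆ = 0) : x = 0 := by
  simpa using (LieModule.mem_maxTrivSubmodule R L L x).2 h

namespace LieIdeal

variable {R L : Type*} [CommRing R] [LieRing L] [LieAlgebra R L] {I : LieIdeal R L}
  (γ : (L ⧸ I) →ₗ[R] L ⧸ I)

def preimageEigenspace (hγ : ∀ x y : L ⧸ I, γ ⁅x, y⁆ = ⁅x, γ y⁆) (r : R) : LieIdeal R L where
  toSubmodule := LinearMap.ker ((γ - r • LinearMap.id) ∘ₗ (LieSubmodule.Quotient.mk' I).toLinearMap)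
  lie_mem {x u} hu := by
    have hu' : γ (LieSubmodule.Quotient.mk u) = r • LieSubmodule.Quotient.mk u := sub_eq_zero.1 hu
    show γ (LieSubmodule.Quotient.mk ⁅x, u⁆) - r • LieSubmodule.Quotient.mk ⁅x, u⁆ = 0
    rw [LieSubmodule.Quotient.mk_bracket, hγ, hu', lie_smul, sub_self]

variable (hγ : ∀ x y : L ⧸ I, γ ⁅x, y⁆ = ⁅x, γ y⁆) (r : R)

lemma mem_preimageEigenspace {u : L} :
    u ∈ preimageEigenspace γ hγ r ↔
      γ (LieSubmodule.Quotient.mk u) = r • LieSubmodule.Quotient.mk u := by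
  simp [preimageEigenspace, sub_eq_zero]

lemma le_preimageEigenspace : I ≤ preimageEigenspace γ hγ r := fun u hu => by
  rw [mem_preimageEigenspace, LieSubmodule.Quotient.mk_eq_zero'.2 hu, map_zero, smul_zero]

end LieIdeal

namespace AffineVirasoro

variable {g L : Type*} [LieRing g] [LieAlgebra ℂ g] [LieRing L] [LieAlgebra ℂ L]
  (V : AffineVirasoro g L)

noncomputable def linearCombination : (ℤ →₀ g) × (ℤ →₀ ℂ) × ℂ × ℂ →ₗ[ℂ] L :=
  (Finsupp.lsum ℂ V.E).coprod <|
    (Finsupp.lsum ℂ fun m => LinearMap.toSpanSingleton ℂ L (V.d m)).coprod <|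
      (LinearMap.toSpanSingleton ℂ L V.K₁).coprod (LinearMap.toSpanSingleton ℂ L V.K₂)

lemma linearCombination_apply (f : ℤ →₀ g) (c : ℤ →₀ ℂ) (a b : ℂ) :
    V.linearCombination (f, c, a, b) =
      (f.sum fun m x => V.E m x) + (c.sum fun m t => t • V.d m) + a • V.K₁ + b • V.K₂ := by
  simp only [linearCombination, LinearMap.coprod_apply, Finsupp.coe_lsum,
    LinearMap.toSpanSingleton_apply, add_assoc]
  rfl

lemma linearCombination_injective : Function.Injective V.linearCombination := by
  rw [← LinearMap.ker_eq_bot, LinearMap.ker_eq_bot']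
  rintro ⟨f, c, a, b⟩ h
  obtain ⟨rfl, rfl, rfl, rfl⟩ := V.indep f c a b (by rwa [← linearCombination_apply])
  rfl

lemma linearCombination_surjective : Function.Surjective V.linearCombination := by
  rw [← LinearMap.range_eq_top, eq_top_iff, ← V.spans, Submodule.span_le]
  rintro v (((rfl | rfl) | ⟨m, rfl⟩) | ⟨-, ⟨m, rfl⟩, x, rfl⟩)
  · exact ⟨(0, 0, 1, 0), by simp [linearCombination]⟩
  · exact ⟨(0, 0, 0, 1), by simp [linearCombination]⟩
  · exact ⟨(0, Finsupp.single m 1, 0, 0), by simp [linearCombination]⟩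
  · exact ⟨(Finsupp.single m x, 0, 0, 0), by simp [linearCombination]⟩

lemma E_injective (n : ℤ) : Function.Injective (V.E n) := by
  intro x y h
  have := V.linearCombination_injective (a₁ := (Finsupp.single n x, 0, 0, 0))
    (a₂ := (Finsupp.single n y, 0, 0, 0)) (by simpa [linearCombination_apply] using h)
  exact Finsupp.single_injective n congr($this.1)

lemma lie_d_zero_E (n : ℤ) (x : g) : ⁅V.d 0, V.E n x⁆ = (n : ℂ) • V.E n x := by
  rw [V.bracket_dE, zero_add]

lemma lie_d_zero_d (n : ℤ) : ⁅V.d 0, V.d n⁆ = (n : ℂ) • V.d n := by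
  simp [V.bracket_dd]

lemma lie_E_zero_d_zero (x : g) : ⁅V.E 0 x, V.d 0⁆ = 0 := by
  rw [← lie_skew, lie_d_zero_E, Int.cast_zero, zero_smul, neg_zero]

lemma K₁_mem_center : V.K₁ ∈ LieAlgebra.center ℂ L :=
  (LieModule.mem_maxTrivSubmodule ℂ L L _).2 V.central_K₁

lemma K₂_mem_center : V.K₂ ∈ LieAlgebra.center ℂ L :=
  (LieModule.mem_maxTrivSubmodule ℂ L L _).2 V.central_K₂

lemma lie_d_zero_linearCombination (f : ℤ →₀ g) (c : ℤ →₀ ℂ) (a b : ℂ) :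
    ⁅V.d 0, V.linearCombination (f, c, a, b)⁆ =
      V.linearCombination (Finsupp.indexSMul ℂ g f, Finsupp.indexSMul ℂ ℂ c, 0, 0) := by
  have h : LieAlgebra.ad ℂ L (V.d 0) ∘ₗ V.linearCombination = V.linearCombination ∘ₗ
      (Finsupp.indexSMul ℂ g).prodMap ((Finsupp.indexSMul ℂ ℂ).prodMap 0) := by
    ext <;> simp [linearCombination, lie_d_zero_E, lie_d_zero_d, V.central_K₁, V.central_K₂]
  exact LinearMap.congr_fun h (f, c, a, b)

lemma exists_eq_of_lie_d_zero_lie_d_zero_eq_zero {u : L} (h : ⁅V.d 0, ⁅V.d 0, u⁆⁆ = 0) :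
    ∃ (x : g) (r a b : ℂ), u = V.E 0 x + r • V.d 0 + a • V.K₁ + b • V.K₂ := by
  obtain ⟨⟨f, c, a, b⟩, rfl⟩ := V.linearCombination_surjective u
  rw [lie_d_zero_linearCombination, lie_d_zero_linearCombination] at h
  have h0 := V.linearCombination_injective (h.trans (map_zero _).symm)
  simp only [Prod.mk_eq_zero] at h0
  obtain ⟨hf, hc, -⟩ := h0
  refine ⟨f 0, c 0, a, b, ?_⟩
  rw [Finsupp.eq_single_zero_of_indexSMul_indexSMul_eq_zero hf,
    Finsupp.eq_single_zero_of_indexSMul_indexSMul_eq_zero hc, linearCombination_apply]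
  simp

lemma eq_zero_of_E_mem_center [LieModule.IsFaithful ℂ g g] {n : ℤ} {x : g}
    (hx : V.E n x ∈ LieAlgebra.center ℂ L) : x = 0 := by
  refine LieAlgebra.eq_zero_of_forall_lie_eq_zero (R := ℂ) fun y => V.E_injective 1 ?_
  -- total degree `1 ≠ 0`, so the bracket has no `K₁` term
  have := (LieModule.mem_maxTrivSubmodule ℂ L L _).1 hx (V.E (1 - n) y)
  simpa [V.bracket_EE] using this

lemma lieIdeal_eq_top_of_d_zero_mem (I : LieIdeal ℂ L) (hd : V.d 0 ∈ I) (hK₁ : V.K₁ ∈ I)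
    (hK₂ : V.K₂ ∈ I) : I = ⊤ := by
  have mem_of_lie_d_zero {v : L} {n : ℤ} (hn : n ≠ 0) (hv : ⁅V.d 0, v⁆ = (n : ℂ) • v) :
      v ∈ I := by
    have h := lie_mem_left ℂ L I _ v hd
    rw [hv] at h
    exact (I.toSubmodule.smul_mem_iff (Int.cast_ne_zero.2 hn)).1 h
  have hE {n : ℤ} (hn : n ≠ 0) (x : g) : V.E n x ∈ I :=
    mem_of_lie_d_zero hn (V.lie_d_zero_E n x)
  have hE₀ (x : g) : V.E 0 x ∈ I := by
    have h : ⁅V.d 1, V.E (-1) x⁆ = -V.E 0 x := by simp [V.bracket_dE]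
    simpa [h] using I.lie_mem (x := V.d 1) (hE (n := -1) (by norm_num) x)
  rw [← LieSubmodule.toSubmodule_eq_top, eq_top_iff, ← V.spans, Submodule.span_le]
  rintro v (((rfl | rfl) | ⟨n, rfl⟩) | ⟨-, ⟨n, rfl⟩, x, rfl⟩)
  · exact hK₁
  · exact hK₂
  · rcases eq_or_ne n 0 with rfl | hn
    · exact hd
    · exact mem_of_lie_d_zero hn (V.lie_d_zero_d n)
  · rcases eq_or_ne n 0 with rfl | hn
    · exact hE₀ x
    · exact hE hn x

open LieSubmodule.Quotient (mk_bracket mk_eq_zero' surjective_mk') in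
lemma exists_eigenvalue_d_zero [LieModule.IsFaithful ℂ g g]
    (γ : (L ⧸ LieAlgebra.center ℂ L) →ₗ[ℂ] L ⧸ LieAlgebra.center ℂ L)
    (hγ : ∀ x y : L ⧸ LieAlgebra.center ℂ L, γ ⁅x, y⁆ = ⁅x, γ y⁆) :
    ∃ r : ℂ, γ (LieSubmodule.Quotient.mk (V.d 0)) = r • LieSubmodule.Quotient.mk (V.d 0) := by
  obtain ⟨u, hu⟩ : ∃ u, LieSubmodule.Quotient.mk u = γ (LieSubmodule.Quotient.mk (V.d 0)) :=
    surjective_mk' _ _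
  have hu_center : ⁅V.d 0, u⁆ ∈ LieAlgebra.center ℂ L := by
    rw [← mk_eq_zero', mk_bracket, hu, ← hγ, lie_self, map_zero]
  obtain ⟨x, r, a, b, rfl⟩ := V.exists_eq_of_lie_d_zero_lie_d_zero_eq_zero
    ((LieModule.mem_maxTrivSubmodule ℂ L L _).1 hu_center _)
  have hγd : γ (LieSubmodule.Quotient.mk (V.d 0)) =
      LieSubmodule.Quotient.mk (V.E 0 x) + r • LieSubmodule.Quotient.mk (V.d 0) := by
    rw [← hu]
    simp [mk_eq_zero'.2 V.K₁_mem_center, mk_eq_zero'.2 V.K₂_mem_center]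
  have hx : x = 0 := by
    refine LieAlgebra.eq_zero_of_forall_lie_eq_zero (R := ℂ) fun y => ?_
    refine V.eq_zero_of_E_mem_center (n := 0) ?_
    have h := hγ (LieSubmodule.Quotient.mk (V.E 0 y)) (LieSubmodule.Quotient.mk (V.d 0))
    rw [hγd, ← mk_bracket, V.lie_E_zero_d_zero, lie_add, lie_smul, ← mk_bracket, ← mk_bracket,
      V.lie_E_zero_d_zero] at h
    simpa [V.bracket_EE, mk_eq_zero'] using h.symm
  exact ⟨r, by simpa [hx] using hγd⟩

end AffineVirasoro

theorem affineVirasoro_quotient_module_endo_scalar_general (g L : Type*) [LieRing g] [LieAlgebra ℂ g] [LieAlgebra.IsSimple ℂ g] [LieRing L] [LieAlgebra ℂ L] (V : AffineVirasoro g L)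
    (γ : (L ⧸ LieAlgebra.center ℂ L) →ₗ[ℂ] (L ⧸ LieAlgebra.center ℂ L))
    (hγ : ∀ x y : L ⧸ LieAlgebra.center ℂ L, γ ⁅x, y⁆ = ⁅x, γ y⁆) :
    ∃ c : ℂ, ∀ v : L ⧸ LieAlgebra.center ℂ L, γ v = c • v := by
  obtain ⟨r, hr⟩ := V.exists_eigenvalue_d_zero γ hγ
  have htop : LieIdeal.preimageEigenspace γ hγ r = ⊤ := by
    refine V.lieIdeal_eq_top_of_d_zero_mem _ ((LieIdeal.mem_preimageEigenspace γ hγ r).2 hr) ?_ ?_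
    exacts [LieIdeal.le_preimageEigenspace γ hγ r V.K₁_mem_center,
      LieIdeal.le_preimageEigenspace γ hγ r V.K₂_mem_center]
  refine ⟨r, fun v => ?_⟩
  obtain ⟨u, rfl⟩ := LieSubmodule.Quotient.surjective_mk' _ v
  exact (LieIdeal.mem_preimageEigenspace γ hγ r).1 (htop ▸ LieSubmodule.mem_top u)

/-- Every module endomorphism of the centerless affine-Virasoro Lie algebra L(g)/Z(L(g)) (w.r.t. the adjoint action) is a scalar multiple of the identity. -/
theorem affineVirasoro_quotient_module_endo_scalar (g L : Type*) [LieRing g] [LieAlgebra ℂ g] [LieAlgebra.IsSimple ℂ g] [FiniteDimensional ℂ g] [LieRing L] [LieAlgebra ℂ L] (V : AffineVirasoro g L)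
    (γ : (L ⧸ LieAlgebra.center ℂ L) →ₗ[ℂ] (L ⧸ LieAlgebra.center ℂ L))
    (hγ : ∀ x y : L ⧸ LieAlgebra.center ℂ L, γ ⁅x, y⁆ = ⁅x, γ y⁆) :
    ∃ c : ℂ, ∀ v : L ⧸ LieAlgebra.center ℂ L, γ v = c • v :=
  affineVirasoro_quotient_module_endo_scalar_general g L V γ hγ
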